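/- arXiv:2109.14594 — 5 statements merged into one kernel-verified Lean document; each statement's English description precedes it below -/
import Mathlib

section
/- Let C be a model category, A a cofibrant object, X a fibrant object, and PX a path object for X, i.e. a factorization X →(w) PX →(p) X × X of the diagonal morphism where w is a weak equivalence and p is a fibration. Then the canonical map Hom_C(A, X) → Hom_{Ho(C)}(A, X) into the localization of C at the weak equivalences is surjective, and two morphisms f, g : A → X have the same image in Ho(C) if and only if there exists h : A → PX with p ∘ h = (f, g). Equivalently, Hom_{Ho(C)}(A, X) is the coequalizer of the two maps Hom_C(A, PX) ⇉ Hom_C(A, X) induced by the two projections PX → X × X → X. -/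
/-!
STATEMENT 1: description of morphisms in the homotopy category of a model category
from a cofibrant object to a fibrant object, via path objects (Quillen).
-/

open CategoryTheory CategoryTheory.Limits

universe v u

/-- A morphism property is closed under retracts. -/
def CategoryTheory.MorphismProperty.IsRetractClosed {C : Type u} [Category.{v} C]
    (P : MorphismProperty C) : Prop :=
  ∀ ⦃X Y X' Y' : C⦄ (f : X ⟶ Y) (g : X' ⟶ Y') (i : X ⟶ X') (r : X' ⟶ X)
    (i' : Y ⟶ Y') (r' : Y' ⟶ Y),
      i ≫ r = 𝟙 X → i' ≫ r' = 𝟙 Y → i ≫ g = f ≫ i' → g ≫ r' = r ≫ f → P g → P f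

/-- A model structure on a category `C`, following Quillen's axioms (as in Mathlib's
`ModelCategory` class). -/
structure ModelStructure (C : Type u) [Category.{v} C] where
  weq : MorphismProperty C
  fib : MorphismProperty C
  cof : MorphismProperty C
  cm1a : HasFiniteLimits C
  cm1b : HasFiniteColimits C
  cm2 : weq.HasTwoOutOfThreeProperty
  cm3a : weq.IsRetractClosed
  cm3b : fib.IsRetractClosed
  cm3c : cof.IsRetractClosed
  cm4a : ∀ ⦃A B X Y : C⦄ (i : A ⟶ B) (p : X ⟶ Y),
      cof i → weq i → fib p → HasLiftingProperty i p
  cm4b : ∀ ⦃A B X Y : C⦄ (i : A ⟶ B) (p : X ⟶ Y),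
      cof i → fib p → weq p → HasLiftingProperty i p
  cm5a : MorphismProperty.HasFactorization
      (fun _ _ f => weq f ∧ cof f : MorphismProperty C) fib
  cm5b : MorphismProperty.HasFactorization
      cof (fun _ _ f => weq f ∧ fib f : MorphismProperty C)

/-!
Once `M` is repackaged as a model category in the sense of Mathlib, this is Quillen's
fundamental lemma: for `A` cofibrant and `X` fibrant, `L : C ⥤ Ho(C)` is surjective on
`A ⟶ X` and identifies exactly the right homotopic maps. Between such objects a right
homotopy can be realized through any path object whose projection `PX ⟶ X ⨯ X` is a
fibration, in particular through the given `PX`.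
-/

namespace CategoryTheory.MorphismProperty

variable {C : Type u} [Category.{v} C]

lemma IsRetractClosed.isStableUnderRetracts {P : MorphismProperty C} (hP : P.IsRetractClosed) :
    P.IsStableUnderRetracts where
  of_retract h hg := hP _ _ h.i.left h.r.left h.i.right h.r.right h.retract_left h.retract_right
    h.i_w h.r_w.symm hg

lemma HasFactorization.of_le {W₁ W₂ W₁' W₂' : MorphismProperty C} (h : HasFactorization W₁ W₂)
    (le₁ : W₁ ≤ W₁') (le₂ : W₂ ≤ W₂') : HasFactorization W₁' W₂' where
  nonempty_mapFactorizationData f :=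
    (h.nonempty_mapFactorizationData f).map fun d =>
      { Z := d.Z, i := d.i, p := d.p, fac := d.fac, hi := le₁ _ d.hi, hp := le₂ _ d.hp }

end CategoryTheory.MorphismProperty

namespace ModelStructure

open HomotopicalAlgebra

variable {C : Type u} [Category.{v} C]

abbrev toModelCategory (M : ModelStructure C) : ModelCategory C where
  categoryWithFibrations := ⟨M.fib⟩
  categoryWithCofibrations := ⟨M.cof⟩
  categoryWithWeakEquivalences := ⟨M.weq⟩
  cm1a := M.cm1a
  cm1b := M.cm1b
  cm2 := M.cm2
  cm3a := M.cm3a.isStableUnderRetracts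
  cm3b := M.cm3b.isStableUnderRetracts
  cm3c := M.cm3c.isStableUnderRetracts
  cm4a i p hi hi' hp := M.cm4a i p hi.mem hi'.mem hp.mem
  cm4b i p hi hp hp' := M.cm4b i p hi.mem hp.mem hp'.mem
  cm5a := M.cm5a.of_le (fun _ _ _ h => ⟨h.2, h.1⟩) le_rfl
  cm5b := M.cm5b.of_le le_rfl (fun _ _ _ h => ⟨h.2, h.1⟩)

end ModelStructure

namespace HomotopicalAlgebra

open CategoryTheory Limits

variable {C : Type u} [Category.{v} C]

lemma PrepathObject.nonempty_rightHomotopy_iff {X Y : C} (P : PrepathObject Y)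
    [HasBinaryProduct Y Y] (f g : X ⟶ Y) :
    Nonempty (P.RightHomotopy f g) ↔ ∃ h : X ⟶ P.P, h ≫ P.p = prod.lift f g := by
  constructor
  · rintro ⟨h⟩
    exact ⟨h.h, by ext <;> simp [PrepathObject.p, prod.lift_fst, prod.lift_snd]⟩
  · rintro ⟨h, hh⟩
    exact ⟨{ h := h
             h₀ := by simpa [PrepathObject.p, prod.lift_fst] using hh =≫ prod.fst
             h₁ := by simpa [PrepathObject.p, prod.lift_snd] using hh =≫ prod.snd }⟩

lemma map_eq_map_iff_nonempty_rightHomotopy [ModelCategory C] {H : Type*} [Category H]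
    (L : C ⥤ H) [L.IsLocalization (weakEquivalences C)] {X Y : C} [IsCofibrant X] [IsFibrant Y]
    (P : PathObject Y) [P.IsGood] (f g : X ⟶ Y) :
    L.map f = L.map g ↔ Nonempty (P.RightHomotopy f g) := by
  rw [← RightHomotopyRel.iff_map_eq L]
  exact ⟨fun h => ⟨h.rightHomotopy P⟩, fun ⟨h⟩ => h.rightHomotopyRel⟩

end HomotopicalAlgebra

open HomotopicalAlgebra

/-- **Quillen.** Let `C` be a model category, `A` a cofibrant object,
`X` a fibrant object, and `X ⟶ PX ⟶ X × X` a path object for `X` (a factorization of the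
diagonal as a weak equivalence `w` followed by a fibration `p = (p₀, p₁)`). Then the
canonical map `Hom_C(A, X) → Hom_{Ho(C)}(A, X)` into the localization of `C` at the weak
equivalences is surjective, and two morphisms `f g : A ⟶ X` become equal in `Ho(C)` if
and only if there is `h : A ⟶ PX` with `h ≫ p = (f, g)`.  In other words,
`Hom_{Ho(C)}(A, X)` is the coequalizer of `Hom_C(A, PX) ⇉ Hom_C(A, X)`. -/
theorem homotopyCategory_hom_of_cofibrant_fibrant
    {C : Type u} [Category.{v} C] (M : ModelStructure C)
    [HasInitial C] [HasTerminal C]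
    (A X PX : C) [HasBinaryProduct X X]
    (hA : M.cof (initial.to A)) (hX : M.fib (terminal.from X))
    (w : X ⟶ PX) (p₀ p₁ : PX ⟶ X)
    (hw : M.weq w) (hp : M.fib (prod.lift p₀ p₁))
    (hfac : w ≫ prod.lift p₀ p₁ = prod.lift (𝟙 X) (𝟙 X)) :
    Function.Surjective (fun f : A ⟶ X => M.weq.Q.map f :
      (A ⟶ X) → (M.weq.Q.obj A ⟶ M.weq.Q.obj X)) ∧
    (∀ f g : A ⟶ X, M.weq.Q.map f = M.weq.Q.map g ↔
      ∃ h : A ⟶ PX, h ≫ prod.lift p₀ p₁ = prod.lift f g) := by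
  let _ := M.toModelCategory
  have : IsCofibrant A := ⟨hA⟩
  have : IsFibrant X := ⟨hX⟩
  have : M.weq.Q.IsLocalization (weakEquivalences C) := Functor.q_isLocalization M.weq
  let P : PathObject X :=
    { P := PX, p₀ := p₀, p₁ := p₁, ι := w
      ι_p₀ := by simpa [prod.lift_fst] using hfac =≫ prod.fst
      ι_p₁ := by simpa [prod.lift_snd] using hfac =≫ prod.snd
      weakEquivalence_ι := ⟨hw⟩ }
  have : P.IsGood := ⟨⟨hp⟩⟩
  refine ⟨map_surjective_of_isLocalization M.weq.Q A X, fun f g => ?_⟩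
  rw [map_eq_map_iff_nonempty_rightHomotopy M.weq.Q P]
  exact P.nonempty_rightHomotopy_iff f g
end

section
/- Let f : A → B be a surjective homomorphism of commutative rings whose kernel I satisfies I² = 0, so that I carries a natural B-module structure (with f(a)·x = a·x for a ∈ A, x ∈ I, well defined since I² = 0). Let B ⊕ I denote the trivial square-zero extension of B by I, the commutative ring with underlying set B × I and multiplication (b, x)(b', x') = (bb', bx' + b'x). Then the map (a, a') ↦ (a, (f(a), a − a')) defines an isomorphism of commutative rings from the fibre product A ×_B A = {(a, a') ∈ A × A : f(a) = f(a')} onto the fibre product A ×_B (B ⊕ I) = {(a, (b, x)) ∈ A × (B ⊕ I) : f(a) = b}. -/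
/-!
Since `f a = f a'` exactly when `a - a' ∈ I`, a point `(a, a')` of `A ×_B A` is the same as a point
`a` of `A` together with a point `a - a'` of `I`, so the map is bijective with inverse
`(a, (b, x)) ↦ (a, a - x)`. It is multiplicative because
`a c - a' c' = a (c - c') + c (a - a') - (a - a') (c - c')`, where the last product vanishes as
`I² = 0` and the rest is `f a • (c - c') + f c • (a - a')`, the product in `B ⊕ I`.
-/

universe u v

abbrev RingHom.fibreProduct {A B C : Type*} [Ring A] [Ring B] [Ring C]
    (f : A →+* C) (g : B →+* C) : Subring (A × B) :=
  RingHom.eqLocus (f.comp (RingHom.fst A B)) (g.comp (RingHom.snd A B))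

namespace RingHom.fibreProduct

variable {A B : Type*} [CommRing A] [CommRing B] (f : A →+* B)

theorem sub_mem_ker (p : f.fibreProduct f) : (p : A × A).1 - (p : A × A).2 ∈ RingHom.ker f :=
  (RingHom.sub_mem_ker_iff f).2 p.2

variable [Module B (RingHom.ker f)] [Module Bᵐᵒᵖ (RingHom.ker f)]
  [IsCentralScalar B (RingHom.ker f)]
  (hsq : ∀ x y : A, x ∈ RingHom.ker f → y ∈ RingHom.ker f → x * y = 0)
  (hsmul : ∀ (a : A) (x : RingHom.ker f), ((f a • x : RingHom.ker f) : A) = a * (x : A))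

def toTrivSqZeroExt : f.fibreProduct f →+* TrivSqZeroExt B (RingHom.ker f) where
  toFun p := ((f p.1.1, ⟨p.1.1 - p.1.2, sub_mem_ker f p⟩) : TrivSqZeroExt B (RingHom.ker f))
  map_one' := TrivSqZeroExt.ext (map_one f) (Subtype.ext (sub_self 1))
  map_zero' := TrivSqZeroExt.ext (map_zero f) (Subtype.ext (sub_self 0))
  map_add' p q := TrivSqZeroExt.ext (map_add f _ _) (Subtype.ext (add_sub_add_comm _ _ _ _))
  map_mul' p q := by
    refine TrivSqZeroExt.ext (map_mul f _ _) (Subtype.ext ?_)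
    have hI : (p.1.1 - p.1.2) * (q.1.1 - q.1.2) = 0 := hsq _ _ (sub_mem_ker f p) (sub_mem_ker f q)
    show p.1.1 * q.1.1 - p.1.2 * q.1.2 =
      ((f p.1.1 • (⟨q.1.1 - q.1.2, sub_mem_ker f q⟩ : RingHom.ker f) +
        MulOpposite.op (f q.1.1) • (⟨p.1.1 - p.1.2, sub_mem_ker f p⟩ : RingHom.ker f) :
          RingHom.ker f) : A)
    rw [op_smul_eq_smul, Submodule.coe_add, hsmul, hsmul]
    linear_combination -hI

def equivTrivSqZeroExt :
    f.fibreProduct f ≃+*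
      f.fibreProduct (TrivSqZeroExt.fstHom B B (RingHom.ker f)).toRingHom :=
  { (((RingHom.fst A A).comp (f.fibreProduct f).subtype).prod
        (toTrivSqZeroExt f hsq hsmul)).codRestrict _ fun _ => rfl with
    invFun q := ⟨(q.1.1, q.1.1 - q.1.2.snd), by
      show f q.1.1 = f (q.1.1 - q.1.2.snd)
      rw [map_sub, RingHom.mem_ker.1 q.1.2.snd.2, sub_zero]⟩
    left_inv p := Subtype.ext (Prod.ext rfl (sub_sub_cancel _ _))
    right_inv q := Subtype.ext (Prod.ext rfl
      (TrivSqZeroExt.ext q.2 (Subtype.ext (sub_sub_cancel _ _)))) }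

end RingHom.fibreProduct

theorem fibreProduct_squareZeroExtension_iso_general
    {A : Type u} {B : Type v} [CommRing A] [CommRing B]
    (f : A →+* B)
    (hsq : ∀ x y : A, x ∈ RingHom.ker f → y ∈ RingHom.ker f → x * y = 0)
    -- the natural `B`-module structure on `I = ker f`, with `f a • x = a • x`
    -- (well defined since `I² = 0`):
    [Module B (RingHom.ker f)] [Module Bᵐᵒᵖ (RingHom.ker f)]
    [IsCentralScalar B (RingHom.ker f)]
    (hsmul : ∀ (a : A) (x : RingHom.ker f),
      ((f a • x : RingHom.ker f) : A) = a * (x : A)) :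
    ∃ e : (RingHom.eqLocus (f.comp (RingHom.fst A A)) (f.comp (RingHom.snd A A))) ≃+*
        (RingHom.eqLocus
          (f.comp (RingHom.fst A (TrivSqZeroExt B (RingHom.ker f))))
          ((TrivSqZeroExt.fstHom B B (RingHom.ker f)).toRingHom.comp
            (RingHom.snd A (TrivSqZeroExt B (RingHom.ker f))))),
      ∀ p : (RingHom.eqLocus (f.comp (RingHom.fst A A)) (f.comp (RingHom.snd A A))),
        ((e p : A × TrivSqZeroExt B (RingHom.ker f)).1 = (p : A × A).1) ∧
        (((e p : A × TrivSqZeroExt B (RingHom.ker f)).2.fst : B) = f ((p : A × A).1)) ∧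
        ((((e p : A × TrivSqZeroExt B (RingHom.ker f)).2.snd : RingHom.ker f) : A) =
          (p : A × A).1 - (p : A × A).2) :=
  ⟨RingHom.fibreProduct.equivTrivSqZeroExt f hsq hsmul, fun _ => ⟨rfl, rfl, rfl⟩⟩

theorem fibreProduct_squareZeroExtension_iso
    {A : Type u} {B : Type v} [CommRing A] [CommRing B]
    (f : A →+* B) (hf : Function.Surjective f)
    (hsq : ∀ x y : A, x ∈ RingHom.ker f → y ∈ RingHom.ker f → x * y = 0)
    -- the natural `B`-module structure on `I = ker f`, with `f a • x = a • x`
    -- (well defined since `I² = 0`):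
    [Module B (RingHom.ker f)] [Module Bᵐᵒᵖ (RingHom.ker f)]
    [IsCentralScalar B (RingHom.ker f)]
    (hsmul : ∀ (a : A) (x : RingHom.ker f),
      ((f a • x : RingHom.ker f) : A) = a * (x : A)) :
    ∃ e : (RingHom.eqLocus (f.comp (RingHom.fst A A)) (f.comp (RingHom.snd A A))) ≃+*
        (RingHom.eqLocus
          (f.comp (RingHom.fst A (TrivSqZeroExt B (RingHom.ker f))))
          ((TrivSqZeroExt.fstHom B B (RingHom.ker f)).toRingHom.comp
            (RingHom.snd A (TrivSqZeroExt B (RingHom.ker f))))),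
      ∀ p : (RingHom.eqLocus (f.comp (RingHom.fst A A)) (f.comp (RingHom.snd A A))),
        ((e p : A × TrivSqZeroExt B (RingHom.ker f)).1 = (p : A × A).1) ∧
        (((e p : A × TrivSqZeroExt B (RingHom.ker f)).2.fst : B) = f ((p : A × A).1)) ∧
        ((((e p : A × TrivSqZeroExt B (RingHom.ker f)).2.snd : RingHom.ker f) : A) =
          (p : A × A).1 - (p : A × A).2) :=
  fibreProduct_squareZeroExtension_iso_general f hsq hsmul
end

section
/- Let R be a Noetherian commutative ring, I ⊆ R an ideal, and C a chain complex of R-modules indexed by the natural numbers such that every term C_n is a finitely generated R-module and every homology module H_n(C) is annihilated by I. Then the canonical chain map from C to its levelwise I-adic completion Ĉ (where Ĉ_n = lim_k C_n/I^k C_n, with the induced differentials) is a quasi-isomorphism, i.e. it induces an isomorphism H_n(C) → H_n(Ĉ) for every n. -/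
/-!
Over a Noetherian ring, `I`-adic completion is exact on finitely generated modules
(Artin–Rees). So completing the inclusion of the cycles `K → C_n` and the projection
`K → H_n(C)` yields a kernel of the completed differential and a cokernel of the induced map
into it: the homology of the completed complex is the completion of `H_n(C)`, and the
comparison map is the canonical map `H_n(C) → H_n(C)^`. As `I` kills `H_n(C)`, all the
quotients `H_n(C) / I^k H_n(C)` with `k ≥ 1` equal `H_n(C)`, so this map is bijective.
-/

open CategoryTheory

universe u

variable {R : Type u} [CommRing R] (I : Ideal R)

noncomputable def adicCompletionComplex (C : ChainComplex (ModuleCat.{u} R) ℕ) :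
    ChainComplex (ModuleCat.{u} R) ℕ where
  X n := ModuleCat.of R (AdicCompletion I (C.X n))
  d i j := ModuleCat.ofHom ((AdicCompletion.map I ((C.d i j).hom : C.X i →ₗ[R] C.X j)).restrictScalars R :
    AdicCompletion I (C.X i) →ₗ[R] AdicCompletion I (C.X j))
  shape i j h := by
    have h0 : ((C.d i j).hom : C.X i →ₗ[R] C.X j) = 0 := by rw [C.shape i j h]; rfl
    refine ModuleCat.hom_ext (LinearMap.ext (fun x => ?_))
    show AdicCompletion.map I (C.d i j).hom x = 0
    rw [h0, AdicCompletion.map_zero]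
    rfl
  d_comp_d' i j k _ _ := by
    have h : ((C.d j k).hom : C.X j →ₗ[R] C.X k) ∘ₗ ((C.d i j).hom : C.X i →ₗ[R] C.X j) = 0 := by
      ext x
      exact congrArg (fun f => ModuleCat.Hom.hom f x) (C.d_comp_d i j k)
    refine ModuleCat.hom_ext (LinearMap.ext (fun x => ?_))
    show AdicCompletion.map I (C.d j k).hom (AdicCompletion.map I (C.d i j).hom x) = 0
    rw [AdicCompletion.map_comp_apply, h, AdicCompletion.map_zero]
    rfl

noncomputable def toAdicCompletionComplex (C : ChainComplex (ModuleCat.{u} R) ℕ) :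
    C ⟶ adicCompletionComplex I C where
  f n := ModuleCat.ofHom (AdicCompletion.of I (C.X n) : C.X n →ₗ[R] AdicCompletion I (C.X n))
  comm' i j _ := by
    refine ModuleCat.hom_ext (LinearMap.ext (fun x => ?_))
    rfl


namespace AdicCompletion

variable {M N P : Type u} [AddCommGroup M] [Module R M] [AddCommGroup N] [Module R N]
  [AddCommGroup P] [Module R P]

theorem isAdicComplete_of_pow_smul_top_eq_bot {n : ℕ}
    (h : I ^ n • (⊤ : Submodule R M) = ⊥) : IsAdicComplete I M where
  haus' x hx := by simpa [SModEq, h] using hx n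
  prec' f hf := by
    refine ⟨f n, fun m => ?_⟩
    rcases le_total m n with hmn | hnm
    · exact hf hmn
    · have hfn : f n = f m := by
        simpa [SModEq, h, Submodule.Quotient.eq, sub_eq_zero] using hf hnm
      rw [hfn]

theorem map_exact_of_finite [IsNoetherianRing R] [Module.Finite R N] [Module.Finite R P]
    {f : M →ₗ[R] N} {g : N →ₗ[R] P} (hfg : Function.Exact f g) :
    Function.Exact (map I f) (map I g) := by
  rw [← LinearMap.subtype_comp_codRestrict _ _ (LinearMap.mem_range_self f),
    ← LinearMap.subtype_comp_codRestrict _ _ (LinearMap.mem_range_self g), ← map_comp,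
    ← map_comp, (map_injective I (Submodule.injective_subtype _)).comp_exact_iff_exact,
    (map_surjective I f.surjective_rangeRestrict).comp_exact_iff_exact]
  exact map_exact (Submodule.injective_subtype _) hfg.linearMap_rangeRestrict
    g.surjective_rangeRestrict

end AdicCompletion

namespace CategoryTheory.ShortComplex

open AdicCompletion Limits

variable (S : ShortComplex (ModuleCat.{u} R))

noncomputable def adicCompletion : ShortComplex (ModuleCat.{u} R) :=
  moduleCatMk ((AdicCompletion.map I S.f.hom).restrictScalars R)
    ((AdicCompletion.map I S.g.hom).restrictScalars R) (by ext x; simp)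

noncomputable def toAdicCompletion : S ⟶ S.adicCompletion I where
  τ₁ := ModuleCat.ofHom (of I S.X₁)
  τ₂ := ModuleCat.ofHom (of I S.X₂)
  τ₃ := ModuleCat.ofHom (of I S.X₃)

variable {S}

lemma Exact.adicCompletion [IsNoetherianRing R] [Module.Finite R S.X₂] [Module.Finite R S.X₃]
    (hS : S.Exact) : (S.adicCompletion I).Exact := by
  rw [ShortExact.moduleCat_exact_iff_function_exact] at hS ⊢
  exact map_exact_of_finite I hS

lemma mono_adicCompletion_f [IsNoetherianRing R] [Module.Finite R S.X₂] [Mono S.f] :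
    Mono (S.adicCompletion I).f :=
  (ModuleCat.mono_iff_injective _).2 <|
    AdicCompletion.map_injective I ((ModuleCat.mono_iff_injective S.f).1 inferInstance)

lemma epi_adicCompletion_g [Epi S.g] : Epi (S.adicCompletion I).g :=
  (ModuleCat.epi_iff_surjective _).2 <|
    AdicCompletion.map_surjective I ((ModuleCat.epi_iff_surjective S.g).1 inferInstance)

namespace LeftHomologyData

variable (h : S.LeftHomologyData)

lemma adicCompletion_map_f'_comp_map_i :
    ModuleCat.ofHom ((AdicCompletion.map I h.f'.hom).restrictScalars R) ≫
      ModuleCat.ofHom ((AdicCompletion.map I h.i.hom).restrictScalars R) =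
    (S.adicCompletion I).f := by
  rw [← ModuleCat.ofHom_comp, ← LinearMap.restrictScalars_comp, AdicCompletion.map_comp,
    ← ModuleCat.hom_comp, h.f'_i]
  rfl

variable [IsNoetherianRing R] [Module.Finite R S.X₂]

lemma finite_K : Module.Finite R h.K :=
  Module.Finite.of_injective h.i.hom ((ModuleCat.mono_iff_injective h.i).1 inferInstance)

lemma finite_H : Module.Finite R h.H :=
  have := h.finite_K
  Module.Finite.of_surjective h.π.hom ((ModuleCat.epi_iff_surjective h.π).1 inferInstance)

variable [Module.Finite R S.X₃]

noncomputable def adicCompletion : (S.adicCompletion I).LeftHomologyData :=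
  have := h.finite_K
  have := h.finite_H
  let cyclesSeq := (ShortComplex.mk h.i S.g h.wi).adicCompletion I
  let homologySeq := (ShortComplex.mk h.f' h.π h.f'_π).adicCompletion I
  have : Mono cyclesSeq.f := mono_adicCompletion_f I
  have : Epi homologySeq.g := epi_adicCompletion_g I
  let hi : IsLimit (KernelFork.ofι cyclesSeq.f cyclesSeq.zero) :=
    ((exact_of_f_is_kernel _ h.hi).adicCompletion I).fIsKernel
  have hf' : hi.lift (KernelFork.ofι _ (S.adicCompletion I).zero) = homologySeq.f :=
    Fork.IsLimit.hom_ext hi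
      ((Fork.IsLimit.lift_ι hi).trans (h.adicCompletion_map_f'_comp_map_i I).symm)
  { K := ModuleCat.of R (AdicCompletion I h.K)
    H := ModuleCat.of R (AdicCompletion I h.H)
    i := cyclesSeq.f
    π := homologySeq.g
    wi := cyclesSeq.zero
    hi := hi
    wπ := hf' ▸ homologySeq.zero
    hπ := isCokernelOfComp (𝟙 _) _
      ((exact_of_g_is_cokernel (ShortComplex.mk h.f' h.π h.f'_π) h.hπ).adicCompletion
        I).gIsCokernel _ ((Category.id_comp _).trans hf') }

lemma adicCompletion_f' :
    (h.adicCompletion I).f' = ModuleCat.ofHom ((AdicCompletion.map I h.f'.hom).restrictScalars R) :=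
  (cancel_mono (h.adicCompletion I).i).1
    ((f'_i _).trans (h.adicCompletion_map_f'_comp_map_i I).symm)

noncomputable def toAdicCompletion :
    LeftHomologyMapData (S.toAdicCompletion I) h (h.adicCompletion I) where
  φK := ModuleCat.ofHom (of I h.K)
  φH := ModuleCat.ofHom (of I h.H)
  commi := rfl
  commf' := by
    rw [adicCompletion_f']
    rfl
  commπ := rfl

end LeftHomologyData

theorem quasiIso_toAdicCompletion [IsNoetherianRing R] [Module.Finite R S.X₂]
    [Module.Finite R S.X₃] (hS : ∀ r ∈ I, ∀ x : S.homology, r • x = 0) :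
    QuasiIso (S.toAdicCompletion I) := by
  let h := S.leftHomologyData
  have hH : I • (⊤ : Submodule R h.H) = ⊥ := Submodule.le_annihilator_iff.1 fun r hr =>
    Submodule.mem_annihilator.2 fun x _ => by
      simpa using congrArg h.homologyIso.hom (hS r hr (h.homologyIso.inv x))
  rw [(h.toAdicCompletion I).quasiIso_iff, ConcreteCategory.isIso_iff_bijective]
  exact of_bijective_iff.2 (isAdicComplete_of_pow_smul_top_eq_bot I (n := 1) (by rwa [pow_one]))

end CategoryTheory.ShortComplex

/-- Let `R` be a Noetherian commutative ring, `I ⊆ R` an ideal, and `C`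
a chain complex of `R`-modules (indexed by `ℕ`) such that every term is a finitely
generated `R`-module and every homology module of `C` is annihilated by `I`. Then the
canonical chain map from `C` to its levelwise `I`-adic completion is a
quasi-isomorphism. -/
theorem quasiIso_toAdicCompletionComplex [IsNoetherianRing R]
    (C : ChainComplex (ModuleCat.{u} R) ℕ)
    (hfg : ∀ n : ℕ, Module.Finite R (C.X n))
    (hann : ∀ (n : ℕ) (r : R), r ∈ I → ∀ x : C.homology n, r • x = 0) :
    QuasiIso (toAdicCompletionComplex I C) := by
  refine (quasiIso_iff _).2 fun n => (quasiIsoAt_iff _ n).2 ?_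
  have : Module.Finite R (C.sc n).X₂ := hfg n
  have : Module.Finite R (C.sc n).X₃ := hfg _
  exact (C.sc n).quasiIso_toAdicCompletion I (hann n)
end

section
/- Let n ≥ 0 and let X be an n-hypergroupoid. Then the unit map X → cosk_{n+1}(X) of the adjunction between (n+1)-truncation and (n+1)-coskeleton is an isomorphism of simplicial sets; in particular X is determined by its simplices in dimensions ≤ n+1. -/
/-!
An `(m+1)`-simplex of an `n`-hypergroupoid with `m ≥ n` is determined by its faces, since its
restriction to the horn `Λ[m+1, 0]` already is. By induction on the dimension, every simplex is
therefore determined by its restrictions to simplices of dimension `≤ n + 1`. Conversely, a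
compatible family of `(n+1)`-truncated simplices over `Δ[m]`, with `m ≥ n + 2`, gives by induction
compatible faces `y₀, …, yₘ`; a filler of the horn `Λ[m, 0]` spanned by `y₁, …, yₘ` has `y₀` as its
remaining face, because both have the same faces. So `X_m → (cosk_{n+1} X)_m` is bijective for
every `m`, i.e. `X` is the pointwise right Kan extension of its `(n+1)`-truncation.
-/

open CategoryTheory Simplicial SSet

universe u

/-- The partial matching map of a simplicial set `X`: restriction of `m`-simplices
(viewed as maps `Δ[m] ⟶ X`) along the horn inclusion `Λ[m, k] ⊆ Δ[m]`. -/
def partialMatchingMap (X : SSet.{u}) (m : ℕ) (k : Fin (m + 1)) (x : X _⦋m⦌) :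
    ((Λ[m, k] : SSet.{u}) ⟶ X) :=
  (SSet.horn.{u} m k).ι ≫ (SSet.yonedaEquiv (X := X) (n := ⦋m⦌)).symm x

/-- A simplicial set `X` is an `n`-hypergroupoid if all partial matching maps
`X_m → Hom(Λ[m,k], X)` (for `m ≥ 1`, `0 ≤ k ≤ m`) are surjective, and those with `m > n`
are bijective. -/
def IsHypergroupoid (n : ℕ) (X : SSet.{u}) : Prop :=
  (∀ (m : ℕ) (k : Fin (m + 2)), Function.Surjective (partialMatchingMap X (m + 1) k)) ∧
  (∀ (m : ℕ) (k : Fin (m + 2)), n < m + 1 →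
    Function.Bijective (partialMatchingMap X (m + 1) k))

open Opposite SimplexCategory

lemma SimplexCategory.Truncated.not_surjective_of_lt {k m : ℕ} (j : SimplexCategory.Truncated k)
    (hm : k < m) (f : j.obj ⟶ ⦋m⦌) : ¬ Function.Surjective f.toOrderHom := fun hf => by
  have := epi_iff_surjective.2 hf
  have : m ≤ j.obj.len := len_le_of_epi f
  have : j.obj.len ≤ k := j.2
  omega

lemma SSet.map_δ_apply {X : SSet.{u}} {Δ : SimplexCategory} {m : ℕ} (f : Δ ⟶ ⦋m⦌)
    (i : Fin (m + 2)) (x : X _⦋m + 1⦌) :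
    X.map f.op (X.δ i x) = X.map (f ≫ δ i).op x := by
  rw [op_comp, Functor.map_comp_apply]
  rfl

lemma horn_ι_comp_partialMatchingMap {X : SSet.{u}} {m : ℕ} (k j : Fin (m + 2)) (hj : j ≠ k)
    (x : X _⦋m + 1⦌) :
    horn.ι k j hj ≫ partialMatchingMap X (m + 1) k x = yonedaEquiv.symm (X.δ j x) := by
  rw [partialMatchingMap, horn.ι_ι_assoc, stdSimplex.δ_comp_yonedaEquiv_symm]

/-- An `m`-simplex of `cosk_n X`, i.e. a map `tr_n Δ[m] ⟶ tr_n X`, presented as a family of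
simplices of `X` indexed by the maps `⦋j⦌ ⟶ ⦋m⦌` with `j ≤ n`. -/
def IsCompatibleFamily (n : ℕ) (X : SSet.{u}) (m : ℕ)
    (F : ∀ j : SimplexCategory.Truncated n, (j.obj ⟶ ⦋m⦌) → X.obj (op j.obj)) : Prop :=
  ∀ (j j' : SimplexCategory.Truncated n) (f : j.obj ⟶ ⦋m⦌) (g : j'.obj ⟶ j.obj),
    F j' (g ≫ f) = X.map g.op (F j f)

namespace IsHypergroupoid

variable {n : ℕ} {X : SSet.{u}}

lemma ext_of_δ (hX : IsHypergroupoid n X) {m : ℕ} (hm : n < m + 1) {x x' : X _⦋m + 1⦌}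
    (h : ∀ i, X.δ i x = X.δ i x') : x = x' :=
  (hX.2 m 0 hm).1 <| horn.hom_ext' fun j hj => by
    rw [horn_ι_comp_partialMatchingMap, horn_ι_comp_partialMatchingMap, h]

lemma exists_δ_eq (hX : IsHypergroupoid n X) {m : ℕ} (hm : n < m + 1)
    (y : Fin (m + 3) → X _⦋m + 1⦌)
    (hy : ∀ a b : Fin (m + 2), a ≤ b → X.δ b (y a.castSucc) = X.δ a (y b.succ)) :
    ∃ x : X _⦋m + 2⦌, ∀ i, X.δ i x = y i := by
  have hf : horn.IsCompatible (i := (0 : Fin (m + 3))) fun j _ => yonedaEquiv.symm (y j) := by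
    intro j k _ _ hjk
    obtain ⟨a, rfl⟩ := j.eq_castSucc_of_ne_last (Fin.ne_last_of_lt hjk)
    obtain ⟨b, rfl⟩ := k.eq_succ_of_ne_zero (Fin.ne_zero_of_lt hjk)
    simp only [Fin.pred_succ, Fin.castPred_castSucc, stdSimplex.δ_comp_yonedaEquiv_symm,
      hy a b (Fin.castSucc_lt_succ_iff.1 hjk)]
  obtain ⟨x, hx⟩ := hX.1 (m + 1) 0 hf.desc
  have hface (j : Fin (m + 3)) (hj : j ≠ 0) : X.δ j x = y j := yonedaEquiv.symm.injective <| by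
    rw [← horn_ι_comp_partialMatchingMap 0 j hj, hx, horn.IsCompatible.ι_desc]
  refine ⟨x, Fin.cases (hX.ext_of_δ hm fun t => ?_) fun t => hface _ t.succ_ne_zero⟩
  have hcomm := ConcreteCategory.congr_hom (X.δ_comp_δ (Fin.zero_le t)) x
  have hy0 := hy 0 t (Fin.zero_le t)
  rw [Fin.castSucc_zero] at hcomm hy0
  calc X.δ t (X.δ 0 x) = X.δ 0 (X.δ t.succ x) := hcomm.symm
    _ = X.δ t (y 0) := by rw [hface _ t.succ_ne_zero, hy0]

lemma ext_of_truncated (hX : IsHypergroupoid n X) {m : ℕ} {x x' : X _⦋m⦌}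
    (h : ∀ (j : SimplexCategory.Truncated (n + 1)) (f : j.obj ⟶ ⦋m⦌),
      X.map f.op x = X.map f.op x') :
    x = x' := by
  induction m using Nat.strong_induction_on with
  | _ m ih =>
  rcases le_or_gt m (n + 1) with hm | hm
  · simpa using h ⟨⦋m⦌, by simpa using hm⟩ (𝟙 _)
  · obtain ⟨M, rfl⟩ : ∃ M, m = M + 1 := ⟨m - 1, by omega⟩
    refine hX.ext_of_δ (by omega) fun i => ih M (by omega) fun j f => ?_
    rw [map_δ_apply, map_δ_apply, h]

lemma exists_of_isCompatibleFamily (hX : IsHypergroupoid n X) {m : ℕ}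
    (F : ∀ j : SimplexCategory.Truncated (n + 1), (j.obj ⟶ ⦋m⦌) → X.obj (op j.obj))
    (hF : IsCompatibleFamily (n + 1) X m F) :
    ∃ x : X _⦋m⦌, ∀ j f, X.map f.op x = F j f := by
  induction m using Nat.strong_induction_on with
  | _ m ih =>
  rcases le_or_gt m (n + 1) with hm | hm
  · let top : SimplexCategory.Truncated (n + 1) := ⟨⦋m⦌, by simpa using hm⟩
    exact ⟨F top (𝟙 _), fun j f => by simpa using (hF top j (𝟙 _) f).symm⟩
  · obtain ⟨M, rfl⟩ : ∃ M, m = M + 2 := ⟨m - 2, by omega⟩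
    have hfaces (i : Fin (M + 3)) : ∃ y : X _⦋M + 1⦌, ∀ j f, X.map f.op y = F j (f ≫ δ i) :=
      ih (M + 1) (by omega) _ fun j j' f g => by rw [← hF, Category.assoc]
    choose y hy using hfaces
    obtain ⟨x, hx⟩ := hX.exists_δ_eq (by omega) y fun a b hab => hX.ext_of_truncated fun j f => by
      rw [map_δ_apply, map_δ_apply, hy, hy, Category.assoc, Category.assoc, δ_comp_δ hab]
    refine ⟨x, fun j f => ?_⟩
    obtain ⟨i, θ, rfl⟩ := eq_comp_δ_of_not_surjective f
      (SimplexCategory.Truncated.not_surjective_of_lt j hm f)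
    rw [← map_δ_apply, hx, hy]

open Functor Limits in
lemma nonempty_isPointwiseRightKanExtensionAt (hX : IsHypergroupoid n X) (m : ℕ) :
    Nonempty ((SimplicialObject.Truncated.rightExtensionInclusion X
      (n + 1)).IsPointwiseRightKanExtensionAt (op ⦋m⦌)) := by
  refine (Types.isLimit_iff _).2 fun s hs => ?_
  let F (j : SimplexCategory.Truncated (n + 1)) (f : j.obj ⟶ ⦋m⦌) := s (.mk (Y := op j) f.op)
  have hF : IsCompatibleFamily (n + 1) X m F := fun j j' f g =>
    (hs (StructuredArrow.homMk (f := .mk (Y := op j) f.op) (f' := .mk (Y := op j') (g ≫ f).op)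
      (ObjectProperty.homMk g).op rfl)).symm
  obtain ⟨x, hx⟩ := hX.exists_of_isCompatibleFamily F hF
  exact ⟨x, fun A => hx A.right.unop A.hom.unop,
    fun x' hx' => hX.ext_of_truncated fun j f => (hx' _).trans (hx j f).symm⟩

end IsHypergroupoid

/-- If `X` is an `n`-hypergroupoid, then the unit map
`X ⟶ cosk_{n+1} X` of the truncation–coskeleton adjunction is an isomorphism of
simplicial sets; in particular `X` is determined by its simplices of dimension
`≤ n + 1`. -/
theorem isIso_coskAdj_unit_of_isHypergroupoid (n : ℕ) (X : SSet.{u})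
    (hX : IsHypergroupoid n X) :
    IsIso ((SSet.coskAdj (n + 1)).unit.app X) := by
  have hKan : (SimplicialObject.Truncated.rightExtensionInclusion X
      (n + 1)).IsPointwiseRightKanExtension := fun Y =>
    (hX.nonempty_isPointwiseRightKanExtensionAt Y.unop.len).some
  exact (SimplicialObject.isCoskeletal_iff_isIso X (n + 1)).mp ⟨hKan.isRightKanExtension⟩
end

section
/- Let X be a 0-hypergroupoid, i.e. a simplicial set such that for every m ≥ 1 and every 0 ≤ k ≤ m the partial matching map X_m → Hom_{sSet}(Λ[m,k], X) is bijective. Then X is isomorphic to the constant simplicial set with value X₀; in particular all face and degeneracy maps of X are bijections. -/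
/-!
Injectivity of the partial matching maps says that a simplex of positive dimension is
determined by all of its faces but one. If two `(m+1)`-simplices have the same `i`-th face,
then each of their other faces shares a codimension-two face with the `i`-th one, so by
induction on `m` (injectivity of faces one dimension lower) all of their faces but one agree,
and the simplices are equal: every face map is injective. Face maps are surjective because
degeneracies are sections of them, so faces and hence degeneracies are bijective. Every
morphism of `Δ` is a composite of cofaces and codegeneracies, so all structure maps of `X` are
bijections, and since `⦋0⦌` is terminal in `Δ`, the maps `X₀ → Xₙ` assemble into an
isomorphism with the constant simplicial set.
-/

open CategoryTheory Simplicial SSet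

universe u

namespace CategoryTheory

noncomputable def Limits.IsInitial.isoConstOfIsIsoMap {J C : Type*} [Category J] [Category C]
    {i : J} (hi : IsInitial i) (F : J ⥤ C) [∀ (p q : J) (f : p ⟶ q), IsIso (F.map f)] :
    F ≅ (Functor.const J).obj (F.obj i) :=
  have (p : J) : IsIso ((coconeOfDiagramInitial hi F).ι.app p) := by dsimp; infer_instance
  have : IsIso (coconeOfDiagramInitial hi F).ι := NatIso.isIso_of_isIso_app _
  asIso (coconeOfDiagramInitial hi F).ι

lemma SimplicialObject.isIso_map_of_isIso_δ_of_isIso_σ {C : Type*} [Category C]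
    (X : SimplicialObject C)
    (hδ : ∀ (m : ℕ) (i : Fin (m + 2)), IsIso (X.δ i))
    (hσ : ∀ (m : ℕ) (i : Fin (m + 1)), IsIso (X.σ i))
    {p q : SimplexCategoryᵒᵖ} (f : p ⟶ q) : IsIso (X.map f) := by
  have hW := SimplexCategory.morphismProperty_eq_top
    ((MorphismProperty.isomorphisms C).inverseImage X).unop (fun i => hδ _ i) (fun i => hσ _ i)
  change ((MorphismProperty.isomorphisms C).inverseImage X).unop f.unop
  simp only [hW, MorphismProperty.top_apply]

end CategoryTheory

namespace SSet

variable {X : SSet.{u}}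

lemma partialMatchingMap_app_face {m : ℕ} (k j : Fin (m + 2)) (hj : j ≠ k) (x : X _⦋m + 1⦌) :
    (partialMatchingMap X (m + 1) k x).app _ (horn.face k j hj) = X.δ j x :=
  rfl

lemma eq_of_δ_eq_of_injective_partialMatchingMap {m : ℕ} {k : Fin (m + 2)}
    (hk : Function.Injective (partialMatchingMap X (m + 1) k)) {x y : X _⦋m + 1⦌}
    (h : ∀ j, j ≠ k → X.δ j x = X.δ j y) : x = y :=
  hk (horn.hom_ext _ _ fun j hj => by simp only [partialMatchingMap_app_face, h j hj])

lemma δ_surjective {m : ℕ} (i : Fin (m + 2)) : Function.Surjective (X.δ i) := by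
  induction i using Fin.lastCases with
  | last => exact fun y => ⟨X.σ (Fin.last m) y, by simpa using δ_comp_σ_succ_apply (Fin.last m) y⟩
  | cast i => exact fun y => ⟨X.σ i y, δ_comp_σ_self_apply i y⟩

lemma exists_δ_comp_δ_eq {m : ℕ} {i j : Fin (m + 3)} (hij : i ≠ j) :
    ∃ a b : Fin (m + 2), ∀ z : X _⦋m + 2⦌, X.δ a (X.δ i z) = X.δ b (X.δ j z) := by
  wlog hlt : i < j generalizing i j
  · obtain ⟨a, b, h⟩ := this hij.symm (hij.lt_or_gt.resolve_left hlt)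
    exact ⟨b, a, fun z => (h z).symm⟩
  obtain ⟨i, rfl⟩ : ∃ i' : Fin (m + 2), i = i'.castSucc :=
    ⟨i.castPred (hlt.trans_le j.le_last).ne, (Fin.castSucc_castPred _ _).symm⟩
  exact ⟨j.pred (ne_bot_of_gt hlt), i, fun z => (δ_comp_δ'_apply hlt z).symm⟩

lemma δ_injective_of_injective_partialMatchingMap
    (hX : ∀ (m : ℕ) (k : Fin (m + 2)), Function.Injective (partialMatchingMap X (m + 1) k))
    (m : ℕ) (i : Fin (m + 2)) : Function.Injective (X.δ i) := by
  induction m with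
  | zero =>
    intro x y hxy
    refine eq_of_δ_eq_of_injective_partialMatchingMap (hX 0 (i + 1)) fun j hj => ?_
    obtain rfl : j = i := by fin_cases i <;> fin_cases j <;> simp_all
    exact hxy
  | succ m ih =>
    intro x y hxy
    obtain ⟨k, hk⟩ := exists_ne i
    refine eq_of_δ_eq_of_injective_partialMatchingMap (hX _ k) fun j hj => ?_
    rcases eq_or_ne j i with rfl | hji
    · exact hxy
    · obtain ⟨a, b, hab⟩ := exists_δ_comp_δ_eq (X := X) hji
      exact ih a (by rw [hab, hab, hxy])

lemma σ_bijective_of_injective_δ {m : ℕ} (i : Fin (m + 1))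
    (hi : Function.Injective (X.δ i.castSucc)) : Function.Bijective (X.σ i) :=
  have hσ : Function.LeftInverse (X.δ i.castSucc) (X.σ i) := δ_comp_σ_self_apply i
  Function.bijective_iff_has_inverse.2 ⟨_, hσ, hσ.rightInverse_of_injective hi⟩

end SSet

/-- Let `X` be a `0`-hypergroupoid, i.e. a simplicial set such that for
every `m ≥ 1` and every `0 ≤ k ≤ m` the partial matching map `X_m → Hom(Λ[m,k], X)` is
bijective. Then `X` is isomorphic to the constant simplicial set with value `X₀`; in
particular all face and degeneracy maps of `X` are bijections. -/
theorem zeroHypergroupoid_isConstant (X : SSet.{u})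
    (hX : ∀ (m : ℕ) (k : Fin (m + 2)), Function.Bijective (partialMatchingMap X (m + 1) k)) :
    Nonempty (X ≅ (Functor.const SimplexCategoryᵒᵖ).obj (X _⦋0⦌)) ∧
    (∀ (m : ℕ) (i : Fin (m + 2)), Function.Bijective (X.δ i : X _⦋m + 1⦌ → X _⦋m⦌)) ∧
    (∀ (m : ℕ) (i : Fin (m + 1)), Function.Bijective (X.σ i : X _⦋m⦌ → X _⦋m + 1⦌)) := by
  have hδ (m : ℕ) (i : Fin (m + 2)) : Function.Bijective (X.δ i) :=
    ⟨δ_injective_of_injective_partialMatchingMap (fun m k => (hX m k).1) m i, δ_surjective i⟩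
  have hσ (m : ℕ) (i : Fin (m + 1)) : Function.Bijective (X.σ i) :=
    σ_bijective_of_injective_δ i (hδ m i.castSucc).1
  have (p q : SimplexCategoryᵒᵖ) (f : p ⟶ q) : IsIso (X.map f) :=
    X.isIso_map_of_isIso_δ_of_isIso_σ (fun m i => (isIso_iff_bijective _).2 (hδ m i))
      (fun m i => (isIso_iff_bijective _).2 (hσ m i)) f
  exact ⟨⟨SimplexCategory.isTerminalZero.op.isoConstOfIsIsoMap X⟩, hδ, hσ⟩
end
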